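/- Let A ⊆ 𝔽₂ⁿ have density α = 𝔼 1_A, let δ, ε ∈ (0,1), set ρ := (ε/2)^{1/2} and H := Spec_ρ(A)^⊥, where Spec_ρ(A) = {r : |1̂_A(r)| ≥ ρα}. Define ν⁽⁴⁾ := 1_A ∗ 1_A ∗ 1_A ∗ 1_A and S_η := {x : ν⁽⁴⁾(x) ≥ ηα³}. Then S_δ + H ⊆ S_{δ−ε}. -/

import Mathlib

/-!
By Fourier inversion, `ν⁽⁴⁾(x + h) - ν⁽⁴⁾(x) = ∑ᵣ 1̂_A(r)⁴ χᵣ(x) (χᵣ(h) - 1)`, since the transform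
of a convolution is the product of the transforms. A frequency `r` with `r ⬝ h = 0` contributes
nothing; every other one lies outside `Spec_ρ(A)`, so `1̂_A(r)⁴ ≤ ρ²α² 1̂_A(r)²` and its term is at
most `ε α² 1̂_A(r)²`. Parseval, `∑ᵣ 1̂_A(r)² = α`, bounds the total by `ε α³`.
-/

open scoped Classical
open Finset

noncomputable def ft {n : ℕ} (f : (Fin n → ZMod 2) → ℝ) (r : Fin n → ZMod 2) : ℝ :=
  (∑ x : Fin n → ZMod 2, f x * (-1 : ℝ) ^ (∑ i, r i * x i).val) /
    (Fintype.card (Fin n → ZMod 2))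

noncomputable def aNorm {n : ℕ} (f : (Fin n → ZMod 2) → ℝ) : ℝ := ∑ r : Fin n → ZMod 2, |ft f r|

noncomputable def cnv {n : ℕ} (f g : (Fin n → ZMod 2) → ℝ) (x : Fin n → ZMod 2) : ℝ :=
  (∑ y : Fin n → ZMod 2, f y * g (x - y)) / (Fintype.card (Fin n → ZMod 2))

noncomputable def ind {n : ℕ} (A : Finset (Fin n → ZMod 2)) (x : Fin n → ZMod 2) : ℝ :=
  if x ∈ A then 1 else 0

noncomputable def density {n : ℕ} (A : Finset (Fin n → ZMod 2)) : ℝ :=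
  (A.card : ℝ) / (Fintype.card (Fin n → ZMod 2))

theorem neg_one_pow_val_eq_one_iff (a : ZMod 2) : (-1 : ℝ) ^ a.val = 1 ↔ a = 0 := by
  rw [neg_one_pow_eq_one_iff_even (by norm_num), Nat.even_iff, ← ZMod.val_eq_zero]
  have := ZMod.val_lt a
  omega

section Fourier

variable {n : ℕ}

noncomputable def walsh (r : Fin n → ZMod 2) : AddChar (Fin n → ZMod 2) ℝ where
  toFun x := (-1) ^ (∑ i, r i * x i).val
  map_zero_eq_one' := by simp
  map_add_eq_mul' x y := by
    simp only [Pi.add_apply, mul_add, sum_add_distrib, ZMod.val_add, pow_add,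
      ← neg_one_pow_eq_pow_mod_two]

theorem walsh_apply (r x : Fin n → ZMod 2) : walsh r x = (-1) ^ (∑ i, r i * x i).val := rfl

theorem walsh_comm (r x : Fin n → ZMod 2) : walsh r x = walsh x r := by
  simp only [walsh_apply, mul_comm]

theorem walsh_eq_one_iff {r x : Fin n → ZMod 2} : walsh r x = 1 ↔ ∑ i, r i * x i = 0 :=
  neg_one_pow_val_eq_one_iff _

theorem abs_walsh (r x : Fin n → ZMod 2) : |walsh r x| = 1 := by
  simp [walsh_apply, abs_pow]

theorem walsh_eq_zero_iff {r : Fin n → ZMod 2} : walsh r = 0 ↔ r = 0 := by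
  refine ⟨fun hr ↦ funext fun j ↦ ?_, fun hr ↦ by ext x; simp [hr, walsh_apply]⟩
  have := walsh_eq_one_iff.mp (DFunLike.congr_fun hr (Pi.single j 1))
  simpa [Pi.single_apply] using this

theorem sum_walsh (z : Fin n → ZMod 2) :
    ∑ r, walsh r z = if z = 0 then (Fintype.card (Fin n → ZMod 2) : ℝ) else 0 := by
  simp only [walsh_comm _ z, AddChar.sum_eq_ite, walsh_eq_zero_iff]

theorem ft_eq_sum_walsh (f : (Fin n → ZMod 2) → ℝ) (r : Fin n → ZMod 2) :
    ft f r = (∑ x, f x * walsh r x) / Fintype.card (Fin n → ZMod 2) := rfl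

theorem sum_ft_mul_walsh (f : (Fin n → ZMod 2) → ℝ) (x : Fin n → ZMod 2) :
    ∑ r, ft f r * walsh r x = f x := by
  have h_orth (y : Fin n → ZMod 2) : y + x = 0 ↔ y = x := by
    rw [add_eq_zero_iff_eq_neg, ZModModule.neg_eq_self]
  calc ∑ r, ft f r * walsh r x
      = (∑ y, f y * ∑ r, walsh r (y + x)) / Fintype.card (Fin n → ZMod 2) := by
        simp only [ft_eq_sum_walsh, AddChar.map_add_eq_mul, div_mul_eq_mul_div, ← sum_div,
          sum_mul, mul_sum]
        rw [sum_comm]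
        simp only [mul_assoc]
    _ = f x := by
        simp [sum_walsh, h_orth]

theorem ft_cnv (f g : (Fin n → ZMod 2) → ℝ) (r : Fin n → ZMod 2) :
    ft (cnv f g) r = ft f r * ft g r := by
  have h_shift (y : Fin n → ZMod 2) :
      ∑ x, g (x - y) * walsh r x = walsh r y * ∑ z, g z * walsh r z := by
    rw [← Equiv.sum_comp (Equiv.addLeft y), mul_sum]
    simp only [Equiv.coe_addLeft, add_sub_cancel_left, AddChar.map_add_eq_mul]
    exact sum_congr rfl fun z _ ↦ by ring
  calc ft (cnv f g) r
      = (∑ y, f y * ∑ x, g (x - y) * walsh r x) / Fintype.card (Fin n → ZMod 2) /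
          Fintype.card (Fin n → ZMod 2) := by
        simp only [ft_eq_sum_walsh, cnv, div_mul_eq_mul_div, ← sum_div, sum_mul, mul_sum]
        rw [sum_comm]
        exact congrArg (· / _ / _) (sum_congr rfl fun _ _ ↦ sum_congr rfl fun _ _ ↦ by ring)
    _ = ft f r * ft g r := by
        simp only [h_shift, ft_eq_sum_walsh, div_mul_div_comm, div_div, sum_mul]
        exact congrArg (· / _) (sum_congr rfl fun _ _ ↦ by ring)

theorem sum_sq_ft (f : (Fin n → ZMod 2) → ℝ) :
    ∑ r, ft f r ^ 2 = (∑ x, f x ^ 2) / Fintype.card (Fin n → ZMod 2) := by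
  calc ∑ r, ft f r ^ 2
      = (∑ x, f x * ∑ r, ft f r * walsh r x) / Fintype.card (Fin n → ZMod 2) := by
        simp only [sq]
        conv_lhs => enter [2, r, 2]; rw [ft_eq_sum_walsh]
        simp only [mul_div_assoc', ← sum_div, mul_sum]
        rw [sum_comm]
        exact congrArg (· / _) (sum_congr rfl fun _ _ ↦ sum_congr rfl fun _ _ ↦ by ring)
    _ = _ := by simp only [sum_ft_mul_walsh, sq]

theorem abs_sub_le_two_mul_sum_abs_ft (f : (Fin n → ZMod 2) → ℝ) (x h : Fin n → ZMod 2) :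
    |f (x + h) - f x| ≤ 2 * ∑ r with ∑ i, r i * h i ≠ 0, |ft f r| := by
  have h_term (r : Fin n → ZMod 2) : |ft f r * walsh r x * (walsh r h - 1)| ≤ 2 * |ft f r| := by
    have : |walsh r h - 1| ≤ 2 := (abs_sub _ _).trans (by simp [abs_walsh]; norm_num)
    rw [abs_mul, abs_mul, abs_walsh, mul_one, mul_comm 2]
    exact mul_le_mul_of_nonneg_left this (abs_nonneg _)
  calc |f (x + h) - f x|
      = |∑ r with ∑ i, r i * h i ≠ 0, ft f r * walsh r x * (walsh r h - 1)| := by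
        rw [sum_filter_of_ne fun r _ hr ↦ mt walsh_eq_one_iff.mpr fun h1 ↦ by simp [h1] at hr]
        simp only [← sum_ft_mul_walsh f, AddChar.map_add_eq_mul, ← sum_sub_distrib]
        exact congrArg _ (sum_congr rfl fun _ _ ↦ by ring)
    _ ≤ ∑ r with ∑ i, r i * h i ≠ 0, 2 * |ft f r| :=
        (abs_sum_le_sum_abs _ _).trans (sum_le_sum fun r _ ↦ h_term r)
    _ = 2 * ∑ r with ∑ i, r i * h i ≠ 0, |ft f r| := (mul_sum ..).symm

theorem ft_cnv_four (f : (Fin n → ZMod 2) → ℝ) (r : Fin n → ZMod 2) :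
    ft (cnv (cnv (cnv f f) f) f) r = ft f r ^ 4 := by
  simp only [ft_cnv]
  ring

theorem sum_sq_ft_ind (A : Finset (Fin n → ZMod 2)) : ∑ r, ft (ind A) r ^ 2 = density A := by
  simp [sum_sq_ft, ind, density]

end Fourier

theorem pow_four_le_of_abs_lt {c b : ℝ} (h : |c| < b) : c ^ 4 ≤ b ^ 2 * c ^ 2 := by
  have : c ^ 2 ≤ b ^ 2 := by
    rw [← sq_abs]
    exact pow_le_pow_left₀ (abs_nonneg c) h.le 2
  nlinarith [sq_nonneg c]

theorem bogolyubov_argument_general {n : ℕ} (A : Finset (Fin n → ZMod 2)) (δ ε : ℝ)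
    (hε : ε ∈ Set.Ioo (0 : ℝ) 1) :
    ∀ x h : Fin n → ZMod 2,
      cnv (cnv (cnv (ind A) (ind A)) (ind A)) (ind A) x ≥ δ * density A ^ 3 →
      (∀ r : Fin n → ZMod 2, |ft (ind A) r| ≥ Real.sqrt (ε / 2) * density A →
        ∑ i, r i * h i = 0) →
      cnv (cnv (cnv (ind A) (ind A)) (ind A)) (ind A) (x + h) ≥ (δ - ε) * density A ^ 3 := by
  intro x h hx h_spec
  set α := density A
  have hε0 : 0 < ε := hε.1
  have h_small (r : Fin n → ZMod 2) (hr : ∑ i, r i * h i ≠ 0) :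
      |ft (ind A) r ^ 4| ≤ ε / 2 * α ^ 2 * ft (ind A) r ^ 2 := by
    have h_lt : |ft (ind A) r| < Real.sqrt (ε / 2) * α := lt_of_not_ge (mt (h_spec r) hr)
    rw [abs_of_nonneg (by positivity)]
    simpa only [mul_pow, Real.sq_sqrt (half_pos hε0).le] using pow_four_le_of_abs_lt h_lt
  have h_diff : |cnv (cnv (cnv (ind A) (ind A)) (ind A)) (ind A) (x + h) -
      cnv (cnv (cnv (ind A) (ind A)) (ind A)) (ind A) x| ≤ ε * α ^ 3 :=
    calc _ ≤ 2 * ∑ r with ∑ i, r i * h i ≠ 0, |ft (ind A) r ^ 4| := by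
          simpa only [ft_cnv_four] using abs_sub_le_two_mul_sum_abs_ft
            (cnv (cnv (cnv (ind A) (ind A)) (ind A)) (ind A)) x h
      _ ≤ 2 * ∑ r with ∑ i, r i * h i ≠ 0, ε / 2 * α ^ 2 * ft (ind A) r ^ 2 := by
          gcongr with r hr
          exact h_small r (mem_filter.mp hr).2
      _ ≤ 2 * ∑ r, ε / 2 * α ^ 2 * ft (ind A) r ^ 2 := by
          gcongr 2 * ?_
          exact sum_le_sum_of_subset_of_nonneg (subset_univ _) fun r _ _ ↦
            mul_nonneg (by positivity) (sq_nonneg _)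
      _ = ε * α ^ 3 := by rw [← mul_sum, sum_sq_ft_ind]; ring
  linarith [(abs_le.mp h_diff).1]

theorem bogolyubov_argument {n : ℕ} (A : Finset (Fin n → ZMod 2)) (δ ε : ℝ)
    (hδ : δ ∈ Set.Ioo (0 : ℝ) 1) (hε : ε ∈ Set.Ioo (0 : ℝ) 1) :
    ∀ x h : Fin n → ZMod 2,
      cnv (cnv (cnv (ind A) (ind A)) (ind A)) (ind A) x ≥ δ * density A ^ 3 →
      (∀ r : Fin n → ZMod 2, |ft (ind A) r| ≥ Real.sqrt (ε / 2) * density A →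
        ∑ i, r i * h i = 0) →
      cnv (cnv (cnv (ind A) (ind A)) (ind A)) (ind A) (x + h) ≥ (δ - ε) * density A ^ 3 :=
  bogolyubov_argument_general A δ ε hε
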